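/- arXiv:1112.0802 — 8 statements merged into one kernel-verified Lean document; each statement's English description precedes it below -/
import Mathlib

section
/- Let M and N be modules over a commutative ring A, and suppose N is generated by a family {n_i}_{i∈I}. Then every element of M ⊗_A N can be written as a finite sum Σ_i m_i ⊗ n_i, and such a sum Σ_i m_i ⊗ n_i equals 0 in M ⊗_A N if and only if there exist finitely many elements m'_j ∈ M and a_{ij} ∈ A such that for every i, Σ_j a_{ij} m'_j = m_i, and for every j, Σ_i a_{ij} n_i = 0. -/
/-!
Let `G : A^(I) → N` be the surjection `eᵢ ↦ nᵢ`. Under `M^(I) ≅ M ⊗ A^(I)`, the sum `∑ mᵢ ⊗ nᵢ`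
is the image of `m` under `M ⊗ G`. Right exactness of `M ⊗ -` makes
`M ⊗ ker G → M ⊗ A^(I) → M ⊗ N → 0` exact: surjectivity gives the first claim, and writing a
preimage in `M ⊗ ker G` as `∑ⱼ m'ⱼ ⊗ cⱼ`, with each `cⱼ` a relation among the `nᵢ`, gives
`aᵢⱼ = cⱼ i`.
-/

open TensorProduct Function

namespace TensorProduct

variable {A : Type*} [CommRing A] {M N P : Type*} [AddCommGroup M] [Module A M]
  [AddCommGroup N] [Module A N] [AddCommGroup P] [Module A P]

theorem exists_fin_sum_tmul (x : M ⊗[A] N) :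
    ∃ (k : ℕ) (m : Fin k → M) (n : Fin k → N), x = ∑ j, m j ⊗ₜ n j := by
  induction x with
  | zero => exact ⟨0, Fin.elim0, Fin.elim0, by simp⟩
  | tmul m n => exact ⟨1, fun _ => m, fun _ => n, by simp⟩
  | add x y hx hy =>
    obtain ⟨k, m, n, rfl⟩ := hx
    obtain ⟨l, m', n', rfl⟩ := hy
    exact ⟨k + l, Fin.append m m', Fin.append n n', by simp [Fin.sum_univ_add]⟩

theorem lTensor_eq_zero_iff_exists_fin_sum_tmul {G : P →ₗ[A] N} (hG : Surjective G)
    (x : M ⊗[A] P) :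
    LinearMap.lTensor M G x = 0 ↔
      ∃ (k : ℕ) (m : Fin k → M) (p : Fin k → P), (∀ j, G (p j) = 0) ∧ x = ∑ j, m j ⊗ₜ p j := by
  constructor
  · intro hx
    obtain ⟨u, rfl⟩ := (lTensor_exact M G.exact_subtype_ker_map hG x).mp hx
    obtain ⟨k, m, p, rfl⟩ := exists_fin_sum_tmul u
    exact ⟨k, m, fun j => p j, fun j => (p j).2, by simp⟩
  · rintro ⟨k, m, p, hp, rfl⟩
    simp [hp]

end TensorProduct

section

variable {A : Type*} [CommRing A] {M N : Type*} [AddCommGroup M] [Module A M]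
  [AddCommGroup N] [Module A N] {I : Type*} [DecidableEq I]

theorem lTensor_linearCombination_finsuppScalarRight_symm (n : I → N) (m : I →₀ M) :
    LinearMap.lTensor M (Finsupp.linearCombination A n) ((finsuppScalarRight A A M I).symm m) =
      m.sum fun i mi => mi ⊗ₜ[A] n i := by
  induction m using Finsupp.induction_linear with
  | zero => simp
  | add m m' hm hm' =>
    rw [map_add, map_add, hm, hm', Finsupp.sum_add_index' (by simp) (by simp [add_tmul])]
  | single i mi => simp

theorem finsuppScalarRight_symm_eq_sum_tmul_iff {κ : Type*} [Fintype κ] (m : I →₀ M)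
    (m' : κ → M) (c : κ → I →₀ A) :
    (finsuppScalarRight A A M I).symm m = ∑ j, m' j ⊗ₜ c j ↔ ∀ i, ∑ j, c j i • m' j = m i := by
  rw [LinearEquiv.symm_apply_eq, Finsupp.ext_iff]
  simp [Finsupp.finsetSum_apply, finsuppScalarRight_apply_tmul_apply, eq_comm]

end

namespace Finsupp

theorem exists_apply_apply_eq {I κ R : Type*} [Zero R] [Finite κ] (c : κ → I →₀ R) :
    ∃ a : I →₀ (κ → R), ∀ i j, a i j = c j i := by
  refine ⟨Finsupp.ofSupportFinite (fun i j => c j i) ?_, fun i j => rfl⟩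
  refine (Set.finite_iUnion fun j => (c j).hasFiniteSupport).subset fun i hi => ?_
  obtain ⟨j, hj⟩ := Function.ne_iff.mp hi
  exact Set.mem_iUnion.mpr ⟨j, hj⟩

theorem linearCombination_mapRange_eval {A N I κ : Type*} [CommRing A] [AddCommGroup N]
    [Module A N] (n : I → N) (a : I →₀ (κ → A)) (j : κ) :
    linearCombination A n (a.mapRange (· j) rfl) = a.sum fun i ai => ai j • n i := by
  rw [linearCombination_apply, sum_mapRange_index (by simp)]

end Finsupp

/-- elements of `M ⊗[A] N` are finite sums `∑ mᵢ ⊗ nᵢ` over a generating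
family `n : I → N`, and such a sum vanishes iff there are finitely many `m'ⱼ ∈ M` and
`aᵢⱼ ∈ A` with `∑ⱼ aᵢⱼ m'ⱼ = mᵢ` for all `i` and `∑ᵢ aᵢⱼ nᵢ = 0` for all `j`. -/
theorem stmt0 {A : Type*} [CommRing A] {M N : Type*} [AddCommGroup M] [Module A M]
    [AddCommGroup N] [Module A N] {I : Type*} (n : I → N)
    (hn : Submodule.span A (Set.range n) = ⊤) :
    (∀ t : M ⊗[A] N, ∃ m : I →₀ M, t = m.sum fun i mi => mi ⊗ₜ[A] n i) ∧
    (∀ m : I →₀ M,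
      (m.sum fun i mi => mi ⊗ₜ[A] n i) = 0 ↔
        ∃ (k : ℕ) (m' : Fin k → M) (a : I →₀ (Fin k → A)),
          (∀ i : I, ∑ j, a i j • m' j = m i) ∧
          (∀ j : Fin k, (a.sum fun i ai => ai j • n i) = 0)) := by
  classical
  have hG : Surjective (Finsupp.linearCombination A n) := by
    rw [← LinearMap.range_eq_top, Finsupp.range_linearCombination, hn]
  refine ⟨fun t => ?_, fun m => ?_⟩
  · obtain ⟨x, rfl⟩ := LinearMap.lTensor_surjective M hG t
    refine ⟨finsuppScalarRight A A M I x, ?_⟩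
    rw [← lTensor_linearCombination_finsuppScalarRight_symm, LinearEquiv.symm_apply_apply]
  rw [← lTensor_linearCombination_finsuppScalarRight_symm,
    TensorProduct.lTensor_eq_zero_iff_exists_fin_sum_tmul hG]
  constructor
  · rintro ⟨k, m', c, hc, hm⟩
    obtain ⟨a, ha⟩ := Finsupp.exists_apply_apply_eq c
    have hac : ∀ j, a.mapRange (· j) rfl = c j := fun j => Finsupp.ext fun i => ha i j
    refine ⟨k, m', a, ?_, fun j => ?_⟩
    · simpa only [ha] using (finsuppScalarRight_symm_eq_sum_tmul_iff m m' c).mp hm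
    · rw [← Finsupp.linearCombination_mapRange_eval, hac, hc]
  · rintro ⟨k, m', a, hm, ha⟩
    refine ⟨k, m', fun j => a.mapRange (· j) rfl, fun j => ?_, ?_⟩
    · rw [Finsupp.linearCombination_mapRange_eval, ha]
    · exact (finsuppScalarRight_symm_eq_sum_tmul_iff m m' _).mpr hm
end

section
/- Let 1 → H → G → G₀ → 1 be an exact sequence of groups equipped with compatible endomorphisms Φ (on G, restricting to H, inducing Φ₀ on G₀). Suppose G₀ is finite, Φ₀^n = id for some n ≥ 1, and ∩_{i≥0} Φ^i(H) = {1}, where moreover H is a direct product ∏_{i≥0} H_i of copies of a finite group on which Φ acts by shifting H_i into H_{i+1}. Then the exact sequence splits: there is a group homomorphism s: G₀ → G with π ∘ s = id, given by s(g₀) = the unique element of ∩_i (Φ^n)^i(π^{-1}(g₀)). -/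
/-- Auxiliary recursion: the coordinates of the unique fixed point. -/
private def xrec {K : Type*} [Monoid K] (n : ℕ) (hn : 1 ≤ n) (c : ℕ → K) : ℕ → K
  | i => c i * (if h : n ≤ i then xrec n hn c (i - n) else 1)
  termination_by i => i
  decreasing_by exact Nat.sub_lt (le_trans hn h) hn

private lemma xrec_eq {K : Type*} [Monoid K] (n : ℕ) (hn : 1 ≤ n) (c : ℕ → K) (i : ℕ) :
    xrec n hn c i = c i * (if n ≤ i then xrec n hn c (i - n) else 1) := by
  rw [xrec, dite_eq_ite]

/-- a split exact sequence.  Let `1 → H → G → G₀ → 1` be exact with an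
endomorphism `Φ` of `G` preserving `H` and inducing `Φ₀` on the finite quotient `G₀`
with `Φ₀ⁿ = id` (`n ≥ 1`).  Assume `⋂ᵢ Φⁱ(H) = {1}`, and that `H` is a countable
direct product of copies of a finite group `K` on which `Φ` acts by shifting the
factors.  Then the sequence splits via `s(g₀) =` the unique element of
`⋂ᵢ (Φⁿ)ⁱ(π⁻¹(g₀))`. -/
theorem stmt4 {G G₀ : Type*} [Group G] [Group G₀] [Finite G₀]
    (Φ : G →* G) (H : Subgroup G) [H.Normal]
    (hΦH : ∀ g ∈ H, Φ g ∈ H)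
    (π : G →* G₀) (hπsurj : Function.Surjective π) (hker : π.ker = H)
    (Φ₀ : G₀ →* G₀) (hcompat : ∀ g : G, π (Φ g) = Φ₀ (π g))
    (n : ℕ) (hn : 1 ≤ n) (hΦ₀n : ∀ g₀ : G₀, (⇑Φ₀)^[n] g₀ = g₀)
    (hint : (⋂ i : ℕ, (⇑Φ)^[i] '' (H : Set G)) = {1})
    (K : Type*) [Group K] [Finite K] (e : H ≃* (ℕ → K))
    (hshift : ∀ h : H,
      e ⟨Φ ↑h, hΦH ↑h h.2⟩ 0 = 1 ∧ ∀ i : ℕ, e ⟨Φ ↑h, hΦH ↑h h.2⟩ (i + 1) = e h i) :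
    ∃ s : G₀ →* G, ∀ g₀ : G₀,
      π (s g₀) = g₀ ∧
      ({s g₀} : Set G) = ⋂ i : ℕ, (⇑Φ)^[n * i] '' (⇑π ⁻¹' {g₀}) := by
  -- membership of iterates in H
  have hmem : ∀ (m : ℕ) (x : G), x ∈ H → (⇑Φ)^[m] x ∈ H := by
    intro m
    induction m with
    | zero => intro x hx; simpa using hx
    | succ k ih =>
      intro x hx
      rw [Function.iterate_succ_apply]
      exact ih _ (hΦH x hx)
  -- coordinates of iterates: a shift by m
  have hcoord : ∀ (m : ℕ) (h : H) (i : ℕ),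
      e ⟨(⇑Φ)^[m] ↑h, hmem m ↑h h.2⟩ i = if m ≤ i then e h (i - m) else 1 := by
    intro m
    induction m with
    | zero => intro h i; simp
    | succ k ih =>
      intro h i
      have key : e ⟨(⇑Φ)^[k + 1] ↑h, hmem (k + 1) ↑h h.2⟩ i
          = if k ≤ i then e ⟨Φ ↑h, hΦH ↑h h.2⟩ (i - k) else 1 :=
        ih ⟨Φ ↑h, hΦH ↑h h.2⟩ i
      rw [key]
      by_cases hki : k ≤ i
      · by_cases hki' : k + 1 ≤ i
        · have h1 : i - k = (i - (k + 1)) + 1 := by omega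
          rw [if_pos hki, h1, (hshift h).2, if_pos hki']
        · have h1 : i - k = 0 := by omega
          rw [if_pos hki, h1, (hshift h).1, if_neg hki']
      · rw [if_neg hki, if_neg (by omega : ¬ k + 1 ≤ i)]
  -- π of iterates
  have hπit : ∀ (m : ℕ) (w : G), π ((⇑Φ)^[m] w) = (⇑Φ₀)^[m] (π w) := by
    intro m
    induction m with
    | zero => intro w; simp
    | succ k ih =>
      intro w
      rw [Function.iterate_succ_apply, Function.iterate_succ_apply, ih, hcompat]
  have hΨπ : ∀ w : G, π ((⇑Φ)^[n] w) = π w := by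
    intro w; rw [hπit, hΦ₀n]
  have hπH : ∀ v : G, v ∈ H → π v = 1 := by
    intro v hv
    rw [← hker] at hv
    exact hv
  have hΨπk : ∀ (k : ℕ) (w : G), π ((⇑Φ)^[n * k] w) = π w := by
    intro k
    induction k with
    | zero => intro w; simp
    | succ m ih =>
      intro w
      have : n * (m + 1) = n * m + n := by ring
      rw [this, Function.iterate_add_apply, ih, hΨπ]
  -- fixed point in each fiber
  have main : ∀ g₀ : G₀, ∃ y : G, π y = g₀ ∧ (⇑Φ)^[n] y = y ∧
      ({y} : Set G) = ⋂ i : ℕ, (⇑Φ)^[n * i] '' (⇑π ⁻¹' {g₀}) := by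
    intro g₀
    obtain ⟨g, hg⟩ := hπsurj g₀
    have hgg : g⁻¹ * (⇑Φ)^[n] g ∈ H := by
      rw [← hker, MonoidHom.mem_ker, map_mul, map_inv, hΨπ, hg, inv_mul_cancel]
    set c : ℕ → K := e ⟨g⁻¹ * (⇑Φ)^[n] g, hgg⟩ with hc
    set x : ℕ → K := xrec n hn c with hx
    -- the fiber-translation map on H
    set F : H → H := fun u => ⟨g⁻¹ * (⇑Φ)^[n] g, hgg⟩ * ⟨(⇑Φ)^[n] ↑u, hmem n ↑u u.2⟩
      with hF
    have hFcoords : ∀ (u : H) (i : ℕ),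
        e (F u) i = c i * (if n ≤ i then e u (i - n) else 1) := by
      intro u i
      rw [hF]
      simp only [map_mul, Pi.mul_apply]
      rw [hcoord n u i]
    have hFx : F (e.symm x) = e.symm x := by
      apply e.injective
      funext i
      rw [hFcoords, e.apply_symm_apply, ← xrec_eq n hn c i]
    have hFk : ∀ (k : ℕ) (u : H) (i : ℕ), i < n * k → e (F^[k] u) i = x i := by
      intro k
      induction k with
      | zero => intro u i hi; omega
      | succ m ih =>
        intro u i hi
        rw [Function.iterate_succ_apply', hFcoords]
        by_cases hni : n ≤ i
        · rw [if_pos hni, ih u (i - n) (by rw [Nat.mul_succ] at hi; omega), hx,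
            xrec_eq n hn c i, if_pos hni]
        · rw [if_neg hni, hx, xrec_eq n hn c i, if_neg hni]
    -- relating iterates of Φ on the fiber with iterates of F
    have hd : ∀ (w : G) (hw : w ∈ π ⁻¹' {g₀}),
        g⁻¹ * (⇑Φ)^[n] w = ↑(F ⟨g⁻¹ * w, by
          rw [← hker, MonoidHom.mem_ker, map_mul, map_inv, hg]
          simp only [Set.mem_preimage, Set.mem_singleton_iff] at hw
          rw [hw, inv_mul_cancel]⟩) := by
      intro w hw
      rw [hF]
      push_cast
      rw [show (⇑Φ)^[n] (g⁻¹ * w) = ((⇑Φ)^[n] g)⁻¹ * (⇑Φ)^[n] w by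
        rw [iterate_map_mul, iterate_map_inv]]
      group
    have hdk : ∀ (k : ℕ) (w : G) (hw : w ∈ π ⁻¹' {g₀}),
        g⁻¹ * (⇑Φ)^[n * k] w = ↑(F^[k] ⟨g⁻¹ * w, by
          rw [← hker, MonoidHom.mem_ker, map_mul, map_inv, hg]
          simp only [Set.mem_preimage, Set.mem_singleton_iff] at hw
          rw [hw, inv_mul_cancel]⟩) := by
      intro k
      induction k with
      | zero => intro w hw; simp
      | succ m ih =>
        intro w hw
        have hw' : (⇑Φ)^[n] w ∈ ⇑π ⁻¹' {g₀} := by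
          simp only [Set.mem_preimage, Set.mem_singleton_iff] at hw ⊢
          rw [hΨπ, hw]
        have e1 : n * (m + 1) = n * m + n := by ring
        have e2 : (⇑Φ)^[n * (m + 1)] w = (⇑Φ)^[n * m] ((⇑Φ)^[n] w) := by
          rw [e1, Function.iterate_add_apply]
        rw [e2, ih ((⇑Φ)^[n] w) hw']
        congr 1
        rw [Function.iterate_succ_apply]
        congr 1
        exact Subtype.ext (hd w hw)
    -- the fixed point
    have hπy : π (g * ↑(e.symm x)) = g₀ := by
      rw [map_mul, hg, hπH ↑(e.symm x) (e.symm x).2, mul_one]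
    have hΨy : (⇑Φ)^[n] (g * ↑(e.symm x)) = g * ↑(e.symm x) := by
      rw [iterate_map_mul]
      calc (⇑Φ)^[n] g * (⇑Φ)^[n] ↑(e.symm x)
          = g * (g⁻¹ * (⇑Φ)^[n] g * (⇑Φ)^[n] ↑(e.symm x)) := by group
        _ = g * ↑(F (e.symm x)) := by rw [hF]; push_cast; ring_nf
        _ = g * ↑(e.symm x) := by rw [hFx]
    refine ⟨g * ↑(e.symm x), hπy, hΨy, ?_⟩
    · have hΨyk : ∀ k : ℕ, (⇑Φ)^[n * k] (g * ↑(e.symm x)) = g * ↑(e.symm x) := by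
        intro k
        rw [Function.iterate_mul]
        exact Function.iterate_fixed hΨy k
      ext z
      simp only [Set.mem_singleton_iff, Set.mem_iInter]
      constructor
      · rintro rfl i
        exact ⟨g * ↑(e.symm x), by simpa using hπy, hΨyk i⟩
      · intro hz
        obtain ⟨w0, hw0, hz0⟩ := hz 0
        have hπz : z ∈ ⇑π ⁻¹' {g₀} := by
          simp only [Nat.mul_zero, Function.iterate_zero_apply] at hz0
          rwa [← hz0]
        have hzH : g⁻¹ * z ∈ H := by
          rw [← hker, MonoidHom.mem_ker, map_mul, map_inv, hg]
          simp only [Set.mem_preimage, Set.mem_singleton_iff] at hπz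
          rw [hπz, inv_mul_cancel]
        have hcz : e ⟨g⁻¹ * z, hzH⟩ = x := by
          funext i
          obtain ⟨w, hw, hzw⟩ := hz (i + 1)
          have := hdk (i + 1) w hw
          rw [hzw] at this
          have hu : (⟨g⁻¹ * z, hzH⟩ : H) = F^[i + 1] ⟨g⁻¹ * w, _⟩ := Subtype.ext this
          rw [hu]
          exact hFk (i + 1) _ i (by nlinarith)
        have : (⟨g⁻¹ * z, hzH⟩ : H) = e.symm x := by
          apply e.injective
          rw [hcz, e.apply_symm_apply]
        have hval : g⁻¹ * z = ↑(e.symm x) := congrArg Subtype.val this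
        rw [← hval]
        group
  -- assemble the homomorphism
  choose f hf1 hf2 hf3 using main
  have hfmem : ∀ (a : G₀) (z : G), π z = a → (⇑Φ)^[n] z = z → z = f a := by
    intro a z hπz hΨz
    have : z ∈ ⋂ i : ℕ, (⇑Φ)^[n * i] '' (⇑π ⁻¹' {a}) := by
      simp only [Set.mem_iInter]
      intro i
      refine ⟨z, by simpa using hπz, ?_⟩
      rw [Function.iterate_mul]
      exact Function.iterate_fixed hΨz i
    rw [← hf3 a] at this
    exact this
  have hmul : ∀ a b : G₀, f (a * b) = f a * f b := by
    intro a b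
    refine (hfmem (a * b) (f a * f b) ?_ ?_).symm
    · rw [map_mul, hf1, hf1]
    · rw [iterate_map_mul, hf2, hf2]
  exact ⟨MonoidHom.mk' f hmul, fun g₀ => ⟨hf1 g₀, hf3 g₀⟩⟩
end

section
/- Let (A,σ) be a difference ring with σ injective on relevant quotients, and (M,σ) a well-mixed difference module over (A,σ) such that every nonzero element has annihilator contained in some prime σ-ideal that is maximal among σ-prime ideals. If the localization M_𝔭 = 0 for every σ-prime ideal 𝔭 of A (a prime ideal with σ^{-1}(𝔭) = 𝔭), then M = 0. More precisely: if M ≠ 0, pick 0 ≠ x ∈ M; then Ann(x) is a proper well-mixed σ-ideal, and for any σ-prime 𝔭 ⊇ Ann(x), the image of x in M_𝔭 is nonzero. -/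
theorem LocalizedModule.mkLinearMap_primeCompl_ne_zero {A M : Type*} [CommRing A]
    [AddCommGroup M] [Module A M] (𝔭 : Ideal A) [𝔭.IsPrime] {x : M}
    (hx : ∀ a : A, a • x = 0 → a ∈ 𝔭) : mkLinearMap 𝔭.primeCompl M x ≠ 0 := by
  rw [Ne, IsLocalizedModule.eq_zero_iff 𝔭.primeCompl]
  rintro ⟨⟨s, hs⟩, hsx⟩
  exact hs (hx s hsx)

theorem stmt7_general {A : Type*} [CommRing A] (σ : A →+* A)
    {M : Type*} [AddCommGroup M] [Module A M]
    (hmax : ∀ x : M, x ≠ 0 → ∃ 𝔭 : Ideal A, 𝔭.IsPrime ∧ Ideal.comap σ 𝔭 = 𝔭 ∧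
      ∀ a : A, a • x = 0 → a ∈ 𝔭) :
    ((∀ (𝔭 : Ideal A) (h𝔭 : 𝔭.IsPrime), Ideal.comap σ 𝔭 = 𝔭 →
        ∀ y : LocalizedModule (@Ideal.primeCompl A _ 𝔭 h𝔭) M, y = 0) → ∀ m : M, m = 0) ∧
    (∀ x : M, x ≠ 0 → ∀ (𝔭 : Ideal A) (h𝔭 : 𝔭.IsPrime),
      (∀ a : A, a • x = 0 → a ∈ 𝔭) →
      LocalizedModule.mkLinearMap (@Ideal.primeCompl A _ 𝔭 h𝔭) M x ≠ 0) := by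
  refine ⟨fun hloc m => ?_, fun x _ 𝔭 _ hx => LocalizedModule.mkLinearMap_primeCompl_ne_zero 𝔭 hx⟩
  by_contra hm
  obtain ⟨𝔭, h𝔭, hσ𝔭, hm𝔭⟩ := hmax m hm
  exact LocalizedModule.mkLinearMap_primeCompl_ne_zero 𝔭 hm𝔭 (hloc 𝔭 h𝔭 hσ𝔭 _)

/-- local-global vanishing for a well-mixed difference module.
If every nonzero element of `M` has its annihilator contained in a `σ`-prime ideal,
and all localizations of `M` at `σ`-prime ideals vanish, then `M = 0`.  More
precisely, if `𝔭` is a prime containing `Ann(x)` then the image of `x` in `M_𝔭`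
is nonzero. -/
theorem stmt7 {A : Type*} [CommRing A] (σ : A →+* A)
    {M : Type*} [AddCommGroup M] [Module A M]
    (σM : M →+ M) (hσM : ∀ (a : A) (m : M), σM (a • m) = σ a • σM m)
    (hwm : ∀ (a : A) (m : M), a • m = 0 → σ a • m = 0)
    (hmax : ∀ x : M, x ≠ 0 → ∃ 𝔭 : Ideal A, 𝔭.IsPrime ∧ Ideal.comap σ 𝔭 = 𝔭 ∧
      ∀ a : A, a • x = 0 → a ∈ 𝔭) :
    ((∀ (𝔭 : Ideal A) (h𝔭 : 𝔭.IsPrime), Ideal.comap σ 𝔭 = 𝔭 →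
        ∀ y : LocalizedModule (@Ideal.primeCompl A _ 𝔭 h𝔭) M, y = 0) → ∀ m : M, m = 0) ∧
    (∀ x : M, x ≠ 0 → ∀ (𝔭 : Ideal A) (h𝔭 : 𝔭.IsPrime),
      (∀ a : A, a • x = 0 → a ∈ 𝔭) →
      LocalizedModule.mkLinearMap (@Ideal.primeCompl A _ 𝔭 h𝔭) M x ≠ 0) :=
  stmt7_general σ hmax
end

section
/- Let (A,σ) be a well-mixed difference domain (integral domain with endomorphism σ, satisfying ab = 0 ⟹ σ(a)b = 0 trivially) with fraction field K, and let C be the integral closure of A in K, which is a difference subring of K. Suppose the inclusion φ: A ↪ C has the property that the localization A_𝔭 is integrally closed (normal) for every σ-prime ideal 𝔭 maximal among σ-primes. Then, granting the principle that a difference module homomorphism whose localizations at all maximal σ-primes are surjective is 'almost surjective' (the well-mixed closure of its image is everything), the well-mixed closure [A]_w of A inside C equals C. -/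
/-!
If `c ∈ C` were outside `W`, the ideal `W : c` would be a proper well-mixed ideal. By Zorn it lies
in a maximal proper well-mixed ideal `𝔪`, and such an ideal is a `σ`-prime, maximal among
`σ`-primes. Since `A_𝔪` is integrally closed, the integral element `c` becomes an element of `A`
after multiplying by some `s ∉ 𝔪`; then `s ∈ W : c ⊆ 𝔪`, a contradiction.
-/

namespace Submodule

variable {A M : Type*} [CommRing A] [AddCommGroup M] [Module A M]

def IsWellMixed (W : Submodule A M) (σ : A →+* A) : Prop :=
  ∀ (a : A) (m : M), a • m ∈ W → σ a • m ∈ W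

variable {σ : A →+* A}

theorem IsWellMixed.colon_singleton {W : Submodule A M} (hW : W.IsWellMixed σ) (m : M) :
    (W.colon {m}).IsWellMixed σ := by
  intro a b hab
  simp only [smul_eq_mul, mem_colon_singleton, mul_smul] at hab ⊢
  exact hW a (b • m) hab

end Submodule

namespace Ideal

open CompleteLattice

variable {A : Type*} [CommRing A] {σ : A →+* A} {I : Ideal A}

theorem map_mem_of_isWellMixed (hI : I.IsWellMixed σ) {a : A} (ha : a ∈ I) : σ a ∈ I := by
  simpa using hI a 1 (by simpa using ha)

theorem isWellMixed_comap_self (hI : I.IsWellMixed σ) : (I.comap σ).IsWellMixed σ := by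
  intro a b hab
  simp only [smul_eq_mul, mem_comap, map_mul] at hab ⊢
  exact hI _ _ hab

theorem isWellMixed_of_isPrime (hI : I.IsPrime) (hσ : I.comap σ = I) : I.IsWellMixed σ := by
  intro a b hab
  rcases hI.mem_or_mem hab with ha | hb
  · rw [← hσ] at ha
    exact I.mul_mem_right b ha
  · exact I.smul_mem _ hb

theorem isWellMixed_sSup {c : Set (Ideal A)} (hc : ∀ I ∈ c, I.IsWellMixed σ) (hne : c.Nonempty)
    (hdir : DirectedOn (· ≤ ·) c) : (sSup c).IsWellMixed σ := by
  intro a b hab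
  obtain ⟨I, hI, habI⟩ := (Submodule.mem_sSup_of_directed hne hdir).mp hab
  exact le_sSup hI (hc I hI a b habI)

theorem exists_le_maximal_isWellMixed (hI : I.IsWellMixed σ) (hne : I ≠ ⊤) :
    ∃ 𝔪, I ≤ 𝔪 ∧ Maximal (fun J : Ideal A => J ≠ ⊤ ∧ J.IsWellMixed σ) 𝔪 := by
  refine zorn_le_nonempty₀ _ (fun c hc hchain J hJ => ?_) I ⟨hne, hI⟩
  have hne : c.Nonempty := ⟨J, hJ⟩
  refine ⟨sSup c, ⟨?_, isWellMixed_sSup (fun K hK => (hc hK).2) hne hchain.directedOn⟩,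
    fun _ => le_sSup⟩
  exact (isCompactElement_top.directed_sSup_lt_of_lt hne hchain.directedOn
    fun K hK => (hc hK).1.lt_top).ne

section Maximal

variable {𝔪 : Ideal A} (h𝔪 : Maximal (fun J : Ideal A => J ≠ ⊤ ∧ J.IsWellMixed σ) 𝔪)
include h𝔪

theorem comap_eq_self_of_maximal_isWellMixed : 𝔪.comap σ = 𝔪 := by
  obtain ⟨hne, hwm⟩ := h𝔪.prop
  refine (h𝔪.eq_of_le ⟨?_, isWellMixed_comap_self hwm⟩
    fun _ => map_mem_of_isWellMixed hwm).symm
  rwa [ne_top_iff_one, mem_comap, map_one, ← ne_top_iff_one]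

theorem isPrime_of_maximal_isWellMixed : 𝔪.IsPrime := by
  obtain ⟨hne, hwm⟩ := h𝔪.prop
  refine ⟨hne, fun {x y} hxy => or_iff_not_imp_right.mpr fun hy => ?_⟩
  by_contra hx
  have hcolon : 𝔪.colon {x} ≠ ⊤ := by
    rwa [ne_top_iff_one, Submodule.mem_colon_singleton, one_smul]
  have hy' : y ∈ 𝔪.colon {x} := by
    rwa [Submodule.mem_colon_singleton, smul_eq_mul, mul_comm]
  exact hy (h𝔪.eq_of_le ⟨hcolon, hwm.colon_singleton x⟩ le_colon ▸ hy')

theorem eq_of_maximal_isWellMixed_le {𝔮 : Ideal A} (h𝔮 : 𝔮.IsPrime) (hσ : 𝔮.comap σ = 𝔮)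
    (hle : 𝔪 ≤ 𝔮) : 𝔮 = 𝔪 :=
  (h𝔪.eq_of_le ⟨h𝔮.ne_top, isWellMixed_of_isPrime h𝔮 hσ⟩ hle).symm

end Maximal

end Ideal

theorem IsLocalization.exists_smul_mem_range_of_isIntegral {A L K : Type*} [CommRing A]
    [CommRing L] [Field K] [Algebra A L] [Algebra A K] [Algebra L K] [IsScalarTower A L K]
    (S : Submonoid A) [IsLocalization S L] [IsFractionRing L K] [IsIntegrallyClosed L]
    {x : K} (hx : IsIntegral A x) : ∃ s ∈ S, ∃ a : A, s • x = algebraMap A K a := by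
  obtain ⟨y, hy⟩ := IsIntegrallyClosed.isIntegral_iff.mp (hx.tower_top (A := L))
  obtain ⟨⟨a, s⟩, rfl⟩ := IsLocalization.mk'_surjective S y
  refine ⟨s, s.2, a, ?_⟩
  have := congrArg (algebraMap L K) (IsLocalization.mk'_spec L a s)
  rwa [map_mul, hy, ← IsScalarTower.algebraMap_apply, ← IsScalarTower.algebraMap_apply,
    mul_comm, ← Algebra.smul_def] at this

theorem stmt10_general {A : Type*} [CommRing A] [IsDomain A] (σ : A →+* A)
    (σK : FractionRing A →+* FractionRing A)
    (hσC : ∀ x ∈ integralClosure A (FractionRing A),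
      σK x ∈ integralClosure A (FractionRing A))
    (hnormal : ∀ (𝔭 : Ideal A) (h𝔭 : 𝔭.IsPrime), Ideal.comap σ 𝔭 = 𝔭 →
      (∀ 𝔮 : Ideal A, 𝔮.IsPrime → Ideal.comap σ 𝔮 = 𝔮 → 𝔭 ≤ 𝔮 → 𝔮 = 𝔭) →
      IsIntegrallyClosed (Localization (@Ideal.primeCompl A _ 𝔭 h𝔭))) :
    ∀ W : Submodule A ↥(integralClosure A (FractionRing A)),
      (∀ a : A, algebraMap A ↥(integralClosure A (FractionRing A)) a ∈ W) →
      (∀ c : ↥(integralClosure A (FractionRing A)),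
        c ∈ W → (⟨σK ↑c, hσC ↑c c.2⟩ : ↥(integralClosure A (FractionRing A))) ∈ W) →
      (∀ (a : A) (c : ↥(integralClosure A (FractionRing A))),
        a • c ∈ W → σ a • c ∈ W) →
      W = ⊤ := by
  intro W hA _ hW
  rw [Submodule.eq_top_iff']
  by_contra! ⟨c, hc⟩
  have hcolon : W.colon {c} ≠ ⊤ := by
    rwa [Ideal.ne_top_iff_one, Submodule.mem_colon_singleton, one_smul]
  obtain ⟨𝔪, hle, h𝔪⟩ :=
    Ideal.exists_le_maximal_isWellMixed (Submodule.IsWellMixed.colon_singleton hW c) hcolon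
  have h𝔪prime := Ideal.isPrime_of_maximal_isWellMixed h𝔪
  have hIC := hnormal 𝔪 h𝔪prime (Ideal.comap_eq_self_of_maximal_isWellMixed h𝔪)
    fun _ h𝔮 hσ => Ideal.eq_of_maximal_isWellMixed_le h𝔪 h𝔮 hσ
  obtain ⟨s, hs, a, hsa⟩ :=
    IsLocalization.exists_smul_mem_range_of_isIntegral (L := Localization 𝔪.primeCompl)
      𝔪.primeCompl c.2
  have hsc : s • c ∈ W := by
    convert hA a
    exact Subtype.ext hsa
  exact hs (hle (Submodule.mem_colon_singleton.mpr hsc))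

/-- let `(A,σ)` be a well-mixed difference domain with fraction field
`K` and let `C` be the integral closure of `A` in `K` (a difference subring since
`σ` preserves integrality).  If `A_𝔭` is integrally closed for every maximal
`σ`-prime `𝔭`, then — granting the principle that a difference module map whose
localizations at all maximal `σ`-primes are surjective is almost surjective — the
well-mixed closure of `A` inside `C` is all of `C`: every `σ`-stable well-mixed
submodule of `C` containing `A` equals `C`. -/
theorem stmt10 {A : Type*} [CommRing A] [IsDomain A] (σ : A →+* A)
    (σK : FractionRing A →+* FractionRing A)
    (hσK : ∀ a : A, σK (algebraMap A (FractionRing A) a)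
      = algebraMap A (FractionRing A) (σ a))
    (hσC : ∀ x ∈ integralClosure A (FractionRing A),
      σK x ∈ integralClosure A (FractionRing A))
    (hnormal : ∀ (𝔭 : Ideal A) (h𝔭 : 𝔭.IsPrime), Ideal.comap σ 𝔭 = 𝔭 →
      (∀ 𝔮 : Ideal A, 𝔮.IsPrime → Ideal.comap σ 𝔮 = 𝔮 → 𝔭 ≤ 𝔮 → 𝔮 = 𝔭) →
      IsIntegrallyClosed (Localization (@Ideal.primeCompl A _ 𝔭 h𝔭)))
    (hp : ∀ (P Q : Type _) (_ : AddCommGroup P) (_ : Module A P)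
        (_ : AddCommGroup Q) (_ : Module A Q)
        (σP : P →+ P) (σQ : Q →+ Q),
        (∀ (a : A) (p : P), σP (a • p) = σ a • σP p) →
        (∀ (a : A) (q : Q), σQ (a • q) = σ a • σQ q) →
        ∀ (φ : P →ₗ[A] Q), (∀ p : P, φ (σP p) = σQ (φ p)) →
        (∀ (𝔭 : Ideal A) (h𝔭 : 𝔭.IsPrime), Ideal.comap σ 𝔭 = 𝔭 →
          (∀ 𝔮 : Ideal A, 𝔮.IsPrime → Ideal.comap σ 𝔮 = 𝔮 → 𝔭 ≤ 𝔮 → 𝔮 = 𝔭) →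
          Function.Surjective
            (IsLocalizedModule.map (@Ideal.primeCompl A _ 𝔭 h𝔭)
              (LocalizedModule.mkLinearMap (@Ideal.primeCompl A _ 𝔭 h𝔭) P)
              (LocalizedModule.mkLinearMap (@Ideal.primeCompl A _ 𝔭 h𝔭) Q) φ)) →
        ∀ W : Submodule A Q, LinearMap.range φ ≤ W →
          (∀ q ∈ W, σQ q ∈ W) →
          (∀ (a : A) (q : Q), a • q ∈ W → σ a • q ∈ W) →
          W = ⊤) :
    ∀ W : Submodule A ↥(integralClosure A (FractionRing A)),
      (∀ a : A, algebraMap A ↥(integralClosure A (FractionRing A)) a ∈ W) →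
      (∀ c : ↥(integralClosure A (FractionRing A)),
        c ∈ W → (⟨σK ↑c, hσC ↑c c.2⟩ : ↥(integralClosure A (FractionRing A))) ∈ W) →
      (∀ (a : A) (c : ↥(integralClosure A (FractionRing A))),
        a • c ∈ W → σ a • c ∈ W) →
      W = ⊤ :=
  stmt10_general σ σK hσC hnormal
end

section
/- Let G be a group with an endomorphism Φ, and suppose G = ∏_{i∈ℕ} G_i is a direct product of isomorphic finite groups such that Φ maps G_i isomorphically into the factor G_{i+1} (i.e., Φ((g_i)_i) = (h_i)_i where h_0 = 1 and h_{i+1} = φ_i(g_i) for isomorphisms φ_i: G_i → G_{i+1}). Then any two elements h, h' ∈ G are Φ-conjugate: for all h, h' ∈ G there exists g ∈ G such that h' = g^{-1} · h · Φ(g). -/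
/-- The shift endomorphism of the countable direct product `∏_{i∈ℕ} K`:
`Φ (g₀, g₁, ...) = (1, g₀, g₁, ...)`. -/
def productShift {K : Type*} [Group K] : (ℕ → K) →* (ℕ → K) where
  toFun g := fun i => match i with
    | 0 => 1
    | Nat.succ j => g j
  map_one' := by
    funext i; cases i <;> rfl
  map_mul' g h := by
    funext i; cases i <;> simp [Pi.mul_apply]

/-- in the countable direct product `G = ∏_{i∈ℕ} K` of copies of a
finite group `K`, with the shift endomorphism `Φ`, any two elements are
`Φ`-conjugate: for all `h, h'` there is `g` with `h' = g⁻¹ * h * Φ g`. -/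
theorem stmt12 {K : Type*} [Group K] [Finite K] :
    ∀ h h' : ℕ → K, ∃ g : ℕ → K, h' = g⁻¹ * h * productShift g := by
  intro h h'
  refine ⟨fun i => Nat.rec (h 0 * (h' 0)⁻¹) (fun j gj => h (j+1) * gj * (h' (j+1))⁻¹) i, ?_⟩
  funext i
  cases i <;> simp [productShift, mul_assoc]
end

section
/- Let R → S be a homomorphism of difference rings ((R,σ) → (S,σ), commuting with the endomorphisms), and suppose it is formally smooth in the difference category: for every difference ring (A,σ), difference ideal I ⊆ A with I² = 0, and commutative square of difference ring maps R → A, S → A/I, there exists a difference ring map S → A lifting S → A/I over R. If moreover S admits a surjection from a difference polynomial ring over R (S is a quotient (P,σ) ↠ (S,σ) with P = R[x_i, σx_i, σ²x_i, ... ] a polynomial ring in the orbit variables and kernel J a difference ideal), then the underlying ring map R → S is formally smooth in the usual sense: one shows R → S formally smooth by producing a section of P/J² → S, obtained from the difference formal smoothness applied to A = P/J², I = J/J². -/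
universe u

/-- The shift endomorphism of the difference polynomial ring
`P = R[x_{i,0}, x_{i,1}, ...]` over `(R, σR)`: it acts as `σR` on coefficients and
sends `x_{i,n}` to `x_{i,n+1}`. -/
noncomputable def diffPolyShift {R : Type u} [CommRing R] (σR : R →+* R) (ι : Type u) :
    MvPolynomial (ι × ℕ) R →+* MvPolynomial (ι × ℕ) R :=
  MvPolynomial.eval₂Hom ((MvPolynomial.C : R →+* MvPolynomial (ι × ℕ) R).comp σR)
    (fun p => MvPolynomial.X (p.1, p.2 + 1))

/-- if `(R,σR) → (S,σS)` is formally smooth in the category of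
difference rings, and `S` admits a surjection from a difference polynomial ring
over `R` with difference-ideal kernel, then the underlying ring map `R → S` is
formally smooth in the usual sense. -/
theorem stmt15 {R S : Type u} [CommRing R] [CommRing S] (f : R →+* S)
    (σR : R →+* R) (σS : S →+* S) (hc : σS.comp f = f.comp σR)
    (hfs : ∀ (A : Type u) [CommRing A] (σA : A →+* A) (I : Ideal A)
      (hσI : I ≤ I.comap σA), I * I = ⊥ →
      ∀ (u : R →+* A) (v : S →+* A ⧸ I),
        σA.comp u = u.comp σR →
        (Ideal.quotientMap I σA hσI).comp v = v.comp σS →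
        (Ideal.Quotient.mk I).comp u = v.comp f →
        ∃ w : S →+* A, (Ideal.Quotient.mk I).comp w = v ∧ w.comp f = u ∧
          σA.comp w = w.comp σS)
    (ι : Type u) (π : MvPolynomial (ι × ℕ) R →+* S)
    (hπ : Function.Surjective π)
    (hπσ : σS.comp π = π.comp (diffPolyShift σR ι))
    (hπR : π.comp MvPolynomial.C = f) :
    ∀ (A : Type u) [CommRing A] (I : Ideal A), I * I = ⊥ →
      ∀ (u : R →+* A) (v : S →+* A ⧸ I),
        (Ideal.Quotient.mk I).comp u = v.comp f →
        ∃ w : S →+* A, (Ideal.Quotient.mk I).comp w = v ∧ w.comp f = u := by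
  intro A' _ I' hI' u' v' hcomm
  classical
  -- Setup: P, shift, kernel J, K = J²
  set σP := diffPolyShift σR ι with hσPdef
  let J : Ideal (MvPolynomial (ι × ℕ) R) := RingHom.ker π
  let K : Ideal (MvPolynomial (ι × ℕ) R) := J * J
  have hKJ : K ≤ J := Ideal.mul_le_left
  have hJσ : J ≤ J.comap σP := by
    intro x hx
    have h1 : π (σP x) = σS (π x) := (RingHom.congr_fun hπσ x).symm
    have hx0 : π x = 0 := hx
    simp only [Ideal.mem_comap]
    show π (σP x) = 0
    rw [h1, hx0, map_zero]
  have hJmap : J.map σP ≤ J := Ideal.map_le_iff_le_comap.mpr hJσ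
  have hσK : K ≤ K.comap σP := by
    rw [← Ideal.map_le_iff_le_comap]
    show Ideal.map σP (J * J) ≤ J * J
    rw [Ideal.map_mul]
    exact Ideal.mul_mono hJmap hJmap
  -- A = P/K, I = J/K
  let σA : (MvPolynomial (ι × ℕ) R ⧸ K) →+* (MvPolynomial (ι × ℕ) R ⧸ K) :=
    Ideal.quotientMap K σP hσK
  let I : Ideal (MvPolynomial (ι × ℕ) R ⧸ K) := J.map (Ideal.Quotient.mk K)
  have hσI : I ≤ I.comap σA := by
    rw [← Ideal.map_le_iff_le_comap]
    show (J.map (Ideal.Quotient.mk K)).map σA ≤ I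
    rw [Ideal.map_map, Ideal.quotientMap_comp_mk, ← Ideal.map_map]
    exact Ideal.map_mono hJmap
  have hII : I * I = ⊥ := by
    show J.map (Ideal.Quotient.mk K) * J.map (Ideal.Quotient.mk K) = ⊥
    rw [← Ideal.map_mul]
    exact Ideal.map_quotient_self K
  -- the iso (P/K)/I ≃ S
  let e1 : (MvPolynomial (ι × ℕ) R ⧸ J) ≃+* S := RingHom.quotientKerEquivOfSurjective hπ
  let e2 : ((MvPolynomial (ι × ℕ) R ⧸ K) ⧸ I) ≃+* (MvPolynomial (ι × ℕ) R ⧸ J) :=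
    DoubleQuot.quotQuotEquivQuotOfLE hKJ
  let e := e2.trans e1
  have he : ∀ p : MvPolynomial (ι × ℕ) R,
      e ((Ideal.Quotient.mk I) ((Ideal.Quotient.mk K) p)) = π p := by
    intro p
    show e1 (e2 ((Ideal.Quotient.mk I) ((Ideal.Quotient.mk K) p))) = π p
    have h2 : e2 ((Ideal.Quotient.mk I) ((Ideal.Quotient.mk K) p)) = Ideal.Quotient.mk J p := by
      exact DoubleQuot.quotQuotEquivQuotOfLE_quotQuotMk p hKJ
    rw [h2]
    exact RingHom.kerLift_mk π p
  let v₀ : S →+* ((MvPolynomial (ι × ℕ) R ⧸ K) ⧸ I) := e.symm.toRingHom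
  have hv : ∀ p : MvPolynomial (ι × ℕ) R,
      v₀ (π p) = (Ideal.Quotient.mk I) ((Ideal.Quotient.mk K) p) := by
    intro p
    rw [← he p]
    exact e.symm_apply_apply _
  let u₀ : R →+* (MvPolynomial (ι × ℕ) R ⧸ K) := (Ideal.Quotient.mk K).comp MvPolynomial.C
  have hσPC : ∀ r : R, σP (MvPolynomial.C r) = MvPolynomial.C (σR r) := by
    intro r
    simp [hσPdef, diffPolyShift]
  have cond1 : σA.comp u₀ = u₀.comp σR := by
    ext r
    show σA ((Ideal.Quotient.mk K) (MvPolynomial.C r)) = (Ideal.Quotient.mk K) (MvPolynomial.C (σR r))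
    rw [Ideal.quotientMap_mk, hσPC]
  have cond2 : (Ideal.quotientMap I σA hσI).comp v₀ = v₀.comp σS := by
    ext x
    obtain ⟨p, rfl⟩ := hπ x
    show Ideal.quotientMap I σA hσI (v₀ (π p)) = v₀ (σS (π p))
    rw [hv p, Ideal.quotientMap_mk, Ideal.quotientMap_mk,
      show σS (π p) = π (σP p) from RingHom.congr_fun hπσ p, hv (σP p)]
  have cond3 : (Ideal.Quotient.mk I).comp u₀ = v₀.comp f := by
    ext r
    show (Ideal.Quotient.mk I) ((Ideal.Quotient.mk K) (MvPolynomial.C r)) = v₀ (f r)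
    rw [← RingHom.congr_fun hπR r]
    exact (hv _).symm
  obtain ⟨w₀, hw1, hw2, -⟩ := hfs _ σA I hσI hII u₀ v₀ cond1 cond2 cond3
  -- πb : P/K → S
  have hKker : ∀ x ∈ K, π x = 0 := fun x hx => hKJ hx
  let πb : (MvPolynomial (ι × ℕ) R ⧸ K) →+* S := Ideal.Quotient.lift K π hKker
  have hEπ : ∀ a : MvPolynomial (ι × ℕ) R ⧸ K, e ((Ideal.Quotient.mk I) a) = πb a := by
    intro a
    obtain ⟨p, rfl⟩ := Ideal.Quotient.mk_surjective a
    rw [he p]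
    exact (Ideal.Quotient.lift_mk K π hKker).symm
  have hsec : ∀ x : S, πb (w₀ x) = x := by
    intro x
    rw [← hEπ,
      show (Ideal.Quotient.mk I) (w₀ x) = v₀ x from RingHom.congr_fun hw1 x]
    exact e.apply_symm_apply x
  -- lift P → A'
  have hgex : ∀ p : ι × ℕ, ∃ a : A', Ideal.Quotient.mk I' a = v' (π (MvPolynomial.X p)) :=
    fun p => Ideal.Quotient.mk_surjective _
  choose g hg using hgex
  let φ : MvPolynomial (ι × ℕ) R →+* A' := MvPolynomial.eval₂Hom u' g
  have hφ : (Ideal.Quotient.mk I').comp φ = v'.comp π := by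
    apply MvPolynomial.ringHom_ext
    · intro r
      show (Ideal.Quotient.mk I') (φ (MvPolynomial.C r)) = v' (π (MvPolynomial.C r))
      rw [show π (MvPolynomial.C r) = f r from RingHom.congr_fun hπR r]
      have h1 : φ (MvPolynomial.C r) = u' r := MvPolynomial.eval₂Hom_C _ _ _
      rw [h1]
      exact RingHom.congr_fun hcomm r
    · intro p
      show (Ideal.Quotient.mk I') (φ (MvPolynomial.X p)) = v' (π (MvPolynomial.X p))
      have h1 : φ (MvPolynomial.X p) = g p := MvPolynomial.eval₂Hom_X' _ _ _
      rw [h1]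
      exact hg p
  have hφJ : J ≤ I'.comap φ := by
    intro x hx
    have h1 : (Ideal.Quotient.mk I') (φ x) = v' (π x) := RingHom.congr_fun hφ x
    have hx0 : π x = 0 := hx
    rw [hx0, map_zero] at h1
    exact Ideal.mem_comap.mpr ((Ideal.Quotient.eq_zero_iff_mem).mp h1)
  have hφK : ∀ x ∈ K, φ x = 0 := by
    have hmap : Ideal.map φ K ≤ ⊥ := by
      show Ideal.map φ (J * J) ≤ ⊥
      rw [Ideal.map_mul, ← hI']
      exact Ideal.mul_mono (Ideal.map_le_iff_le_comap.mpr hφJ) (Ideal.map_le_iff_le_comap.mpr hφJ)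
    intro x hx
    exact Ideal.mem_bot.mp (hmap (Ideal.mem_map_of_mem φ hx))
  let φb : (MvPolynomial (ι × ℕ) R ⧸ K) →+* A' := Ideal.Quotient.lift K φ hφK
  have hφb : (Ideal.Quotient.mk I').comp φb = v'.comp πb := by
    apply Ideal.Quotient.ringHom_ext
    apply RingHom.ext
    intro p
    show (Ideal.Quotient.mk I') (φ p) = v' (πb ((Ideal.Quotient.mk K) p))
    rw [Ideal.Quotient.lift_mk K π hKker]
    exact RingHom.congr_fun hφ p
  refine ⟨φb.comp w₀, ?_, ?_⟩
  · ext x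
    show (Ideal.Quotient.mk I') (φb (w₀ x)) = v' x
    rw [show (Ideal.Quotient.mk I') (φb (w₀ x)) = v' (πb (w₀ x)) from
      RingHom.congr_fun hφb (w₀ x)]
    show v' (πb (w₀ x)) = v' x
    rw [hsec x]
  · ext r
    show φb (w₀ (f r)) = u' r
    rw [show w₀ (f r) = u₀ r from RingHom.congr_fun hw2 r]
    show φb ((Ideal.Quotient.mk K) (MvPolynomial.C r)) = u' r
    rw [Ideal.Quotient.lift_mk K φ hφK]
    exact MvPolynomial.eval₂Hom_C _ _ _
end

section
/- Let (R,σ) → (S,σ) be a map of difference rings. The following are equivalent: (1) the map is formally unramified in the difference category (for every difference ring (A,σ) and difference ideal I with I² = 0, there is at most one difference ring lift S → A of any given S → A/I over R); (2) the underlying ring map R → S is formally unramified; (3) Ω_{S/R} = 0. -/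
/-!
Formal unramifiedness of `R → S` is by definition the vanishing of `Ω[S⁄R]`, and it gives unique
lifts, in particular unique difference lifts. Conversely, two ordinary lifts `g₁ g₂ : S → B` of
a map `S → B ⧸ I` prolong, via `s ↦ (gᵢ (σⁿ s))ₙ`, to difference maps into the cofree difference
ring `ℕ → B` with the shift. They agree on `R` because `σ` commutes with `R → S`, and they lift
the same map modulo the square-zero difference ideal `Iᴺ`. Uniqueness of difference lifts
identifies them, and evaluating at `0` gives `g₁ = g₂`.
-/

universe u

namespace Pi

def shiftRingHom (B : Type*) [Semiring B] : (ℕ → B) →+* (ℕ → B) :=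
  RingHom.pi fun n => Pi.evalRingHom _ (n + 1)

@[simp]
theorem shiftRingHom_apply {B : Type*} [Semiring B] (b : ℕ → B) (n : ℕ) :
    shiftRingHom B b n = b (n + 1) :=
  rfl

end Pi

namespace RingHom

variable {S B : Type*} [Semiring S] [Semiring B]

def prolong (g : S →+* B) (σ : S →+* S) : S →+* (ℕ → B) :=
  RingHom.pi fun n => g.comp (σ ^ n)

@[simp]
theorem prolong_apply (g : S →+* B) (σ : S →+* S) (s : S) (n : ℕ) :
    g.prolong σ s n = g (σ^[n] s) :=
  rfl

theorem shiftRingHom_comp_prolong (g : S →+* B) (σ : S →+* S) :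
    (Pi.shiftRingHom B).comp (g.prolong σ) = (g.prolong σ).comp σ := by
  ext s n
  simp [Function.iterate_succ_apply]

theorem evalRingHom_zero_comp_prolong (g : S →+* B) (σ : S →+* S) :
    (Pi.evalRingHom _ 0).comp (g.prolong σ) = g :=
  rfl

theorem prolong_comp_eq_prolong_comp {R : Type*} [Semiring R] {σR : R →+* R} {σS : S →+* S}
    {φ : R →+* S} (hφ : ∀ r, σS (φ r) = φ (σR r)) {g₁ g₂ : S →+* B}
    (h : g₁.comp φ = g₂.comp φ) : (g₁.prolong σS).comp φ = (g₂.prolong σS).comp φ := by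
  ext r n
  have hφn : φ (σR^[n] r) = σS^[n] (φ r) :=
    Function.Semiconj.iterate_right (fun r => (hφ r).symm) n r
  simpa [hφn] using RingHom.congr_fun h (σR^[n] r)

end RingHom

namespace Ideal

variable {B : Type*} [CommRing B]

theorem pi_le_comap_shiftRingHom (I : Ideal B) :
    pi (fun _ => I) ≤ (pi fun _ => I).comap (Pi.shiftRingHom B) :=
  fun _ hb n => hb (n + 1)

theorem pi_mul_self_eq_bot {I : Ideal B} (hI : I * I = ⊥) {ι : Type*} :
    pi (fun _ : ι => I) * pi (fun _ => I) = ⊥ := by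
  refine eq_bot_iff.mpr (mul_le.mpr fun x hx y hy => ?_)
  ext i
  exact (mem_bot.mp (hI ▸ mul_mem_mul (hx i) (hy i)) :)

theorem quotient_mk_pi_comp_prolong {S : Type*} [Semiring S] {I : Ideal B} {σ : S →+* S}
    {g₁ g₂ : S →+* B} (h : (Quotient.mk I).comp g₁ = (Quotient.mk I).comp g₂) :
    (Quotient.mk (pi fun _ => I)).comp (g₁.prolong σ) =
      (Quotient.mk (pi fun _ => I)).comp (g₂.prolong σ) := by
  ext s
  refine Quotient.eq.mpr fun n => Quotient.eq.mp ?_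
  exact RingHom.congr_fun h (σ^[n] s)

end Ideal

namespace Algebra

variable (R : Type u) {S : Type u} [CommRing R] [CommRing S] [Algebra R S]

def DifferenceFormallyUnramified (σS : S →+* S) : Prop :=
  ∀ (A : Type u) (_ : CommRing A) (σA : A →+* A) (I : Ideal A),
    I ≤ I.comap σA → I * I = ⊥ →
    ∀ w₁ w₂ : S →+* A,
      w₁.comp (algebraMap R S) = w₂.comp (algebraMap R S) →
      σA.comp w₁ = w₁.comp σS → σA.comp w₂ = w₂.comp σS →
      (Ideal.Quotient.mk I).comp w₁ = (Ideal.Quotient.mk I).comp w₂ →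
      w₁ = w₂

variable {R}

theorem FormallyUnramified.ringHom_ext [FormallyUnramified R S] {A : Type*} [CommRing A]
    {I : Ideal A} (hI : I * I = ⊥) {w₁ w₂ : S →+* A}
    (hR : w₁.comp (algebraMap R S) = w₂.comp (algebraMap R S))
    (h : (Ideal.Quotient.mk I).comp w₁ = (Ideal.Quotient.mk I).comp w₂) : w₁ = w₂ := by
  let : Algebra R A := (w₁.comp (algebraMap R S)).toAlgebra
  let f₁ : S →ₐ[R] A := { w₁ with commutes' := fun _ => rfl }
  let f₂ : S →ₐ[R] A := { w₂ with commutes' := fun r => (RingHom.congr_fun hR r).symm }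
  have : f₁ = f₂ :=
    FormallyUnramified.ext I ⟨2, by rwa [pow_two]⟩ fun s => RingHom.congr_fun h s
  exact RingHom.ext (AlgHom.congr_fun this)

theorem FormallyUnramified.differenceFormallyUnramified [FormallyUnramified R S]
    (σS : S →+* S) : DifferenceFormallyUnramified R σS :=
  fun _ _ _ _ _ hI _ _ hR _ _ h => ringHom_ext hI hR h

theorem DifferenceFormallyUnramified.formallyUnramified {σR : R →+* R} {σS : S →+* S}
    (hcompat : ∀ r : R, σS (algebraMap R S r) = algebraMap R S (σR r))
    (h : DifferenceFormallyUnramified R σS) : FormallyUnramified R S := by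
  refine FormallyUnramified.iff_comp_injective.mpr fun B _ _ I hI f₁ f₂ e => ?_
  have hprolong : (f₁ : S →+* B).prolong σS = (f₂ : S →+* B).prolong σS :=
    h (ℕ → B) inferInstance (Pi.shiftRingHom B) (Ideal.pi fun _ => I)
      (Ideal.pi_le_comap_shiftRingHom I) (Ideal.pi_mul_self_eq_bot (by rwa [← pow_two]))
      _ _ (RingHom.prolong_comp_eq_prolong_comp hcompat
        (f₁.comp_algebraMap.trans f₂.comp_algebraMap.symm))
      (RingHom.shiftRingHom_comp_prolong _ _) (RingHom.shiftRingHom_comp_prolong _ _)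
      (Ideal.quotient_mk_pi_comp_prolong (RingHom.ext (AlgHom.congr_fun e)))
  have := congrArg (Pi.evalRingHom _ 0).comp hprolong
  simp only [RingHom.evalRingHom_zero_comp_prolong] at this
  exact AlgHom.coe_ringHom_injective this

theorem formallyUnramified_iff_forall_eq_zero :
    FormallyUnramified R S ↔ ∀ ω : Ω[S⁄R], ω = 0 :=
  (formallyUnramified_iff R S).trans (subsingleton_iff_forall_eq 0)

end Algebra

/-- for a map of difference rings `(R,σR) → (S,σS)` the following are
equivalent: (1) formal unramifiedness in the difference category (at most one
difference lift against square-zero difference ideals); (2) formal unramifiedness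
of the underlying ring map; (3) `Ω[S⁄R] = 0`. -/
theorem stmt17 {R S : Type u} [CommRing R] [CommRing S] [Algebra R S]
    (σR : R →+* R) (σS : S →+* S)
    (hcompat : ∀ r : R, σS (algebraMap R S r) = algebraMap R S (σR r)) :
    ((∀ (A : Type u) (_ : CommRing A) (σA : A →+* A) (I : Ideal A),
        I ≤ I.comap σA → I * I = ⊥ →
        ∀ w₁ w₂ : S →+* A,
          w₁.comp (algebraMap R S) = w₂.comp (algebraMap R S) →
          σA.comp w₁ = w₁.comp σS → σA.comp w₂ = w₂.comp σS →
          (Ideal.Quotient.mk I).comp w₁ = (Ideal.Quotient.mk I).comp w₂ →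
          w₁ = w₂) ↔
      Algebra.FormallyUnramified R S) ∧
    (Algebra.FormallyUnramified R S ↔ ∀ ω : Ω[S⁄R], ω = 0) :=
  ⟨⟨Algebra.DifferenceFormallyUnramified.formallyUnramified hcompat,
      fun _ => Algebra.FormallyUnramified.differenceFormallyUnramified σS⟩,
    Algebra.formallyUnramified_iff_forall_eq_zero⟩
end

section
/- Let G be a finite group acting faithfully by automorphisms on an integral domain B with A = B^G, and let 𝔮 be a prime of B lying over 𝔭 = 𝔮 ∩ A such that the inertia group of 𝔮 is all of G (G acts trivially on the residue field extension, κ(𝔮) = κ(𝔭)) and the localization A_𝔭 → B_𝔮 is finite étale. Then G is trivial. (Classical fact underlying: a connected finite étale Galois cover is étale exactly when all inertia groups are trivial.) -/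
/-- The subring of `G`-fixed points of a ring `B` with a `G`-action by ring
automorphisms. -/
def fixedSubring (G : Type*) [Group G] (B : Type*) [CommRing B]
    [MulSemiringAction G B] : Subring B where
  carrier := {b | ∀ g : G, g • b = b}
  one_mem' := fun g => smul_one g
  mul_mem' := fun {a b} ha hb g => by rw [smul_mul', ha g, hb g]
  zero_mem' := fun g => smul_zero g
  add_mem' := fun {a b} ha hb g => by rw [smul_add, ha g, hb g]
  neg_mem' := fun {a} ha g => by rw [smul_neg, ha g]

/-! Since `A_𝔭 → B_𝔮` is finite and unramified, `𝔭 B_𝔮` is the maximal ideal of `B_𝔮`; as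
`κ(𝔮) = κ(𝔭)`, Nakayama's lemma makes `A_𝔭 → B_𝔮` surjective. Hence every `b ∈ B` satisfies
`s b = a` with `a, s ∈ A`, `s ≠ 0`, so `G` fixes `b`, and faithfulness forces `G = 1`. -/

open IsLocalRing

theorem IsLocalRing.algebraMap_surjective_of_forall_sub_mem_maximalIdeal
    {R S : Type*} [CommRing R] [CommRing S] [IsLocalRing R] [IsLocalRing S] [Algebra R S]
    [IsLocalHom (algebraMap R S)] [Module.Finite R S] [Algebra.FormallyUnramified R S]
    (H : ∀ x : S, ∃ r : R, x - algebraMap R S r ∈ maximalIdeal S) :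
    Function.Surjective (algebraMap R S) := by
  change Function.Surjective (Algebra.linearMap R S)
  rw [← LinearMap.range_eq_top, ← top_le_iff]
  apply Submodule.le_of_le_smul_of_le_jacobson_bot Module.Finite.fg_top
    (maximalIdeal_le_jacobson _)
  rw [Ideal.smul_top_eq_map, Algebra.FormallyUnramified.map_maximalIdeal]
  rintro x -
  obtain ⟨r, hr⟩ := H x
  rw [← add_sub_cancel (algebraMap R S r) x]
  exact Submodule.add_mem_sup ⟨r, rfl⟩ hr

theorem Localization.AtPrime.exists_sub_localRingHom_mem_maximalIdeal {R B : Type*}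
    [CommRing R] [CommRing B] (f : R →+* B) (q : Ideal B) [q.IsPrime]
    (hres : ∀ b : B, ∃ a s : R, f s ∉ q ∧ f s * b - f a ∈ q)
    (x : Localization.AtPrime q) :
    ∃ r, x - localRingHom (q.comap f) q f rfl r ∈ maximalIdeal (Localization.AtPrime q) := by
  set φ := localRingHom (q.comap f) q f rfl
  -- `K` is a subfield, so it suffices to treat `b` and `t` in `x = b / t`.
  set K := (ResidueField.map φ).fieldRange
  suffices hx : residue _ x ∈ K by
    obtain ⟨y, hy⟩ := hx
    obtain ⟨r, rfl⟩ := residue_surjective y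
    refine ⟨r, ?_⟩
    rw [← residue_eq_zero_iff, map_sub, ← hy, ResidueField.map_residue, sub_self]
  have hB : ∀ b : B, residue _ (algebraMap B (Localization.AtPrime q) b) ∈ K := by
    have hK : ∀ a : R, residue _ (algebraMap B (Localization.AtPrime q) (f a)) ∈ K := fun a =>
      ⟨residue _ (algebraMap R _ a), by
        rw [ResidueField.map_residue, localRingHom_to_map]⟩
    intro b
    obtain ⟨a, s, hs, hsb⟩ := hres b
    have hs0 : residue _ (algebraMap B (Localization.AtPrime q) (f s)) ≠ 0 := by
      rw [residue_ne_zero_iff_isUnit]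
      exact IsLocalization.map_units _ (⟨f s, hs⟩ : q.primeCompl)
    have hsb' : residue _ (algebraMap B (Localization.AtPrime q) (f s * b - f a)) = 0 := by
      rw [residue_eq_zero_iff, ← Localization.AtPrime.map_eq_maximalIdeal]
      exact Ideal.mem_map_of_mem _ hsb
    rw [map_sub, map_sub, map_mul, map_mul, sub_eq_zero, mul_comm, ← eq_div_iff hs0] at hsb'
    rw [hsb']
    exact div_mem (hK a) (hK s)
  obtain ⟨b, t, rfl⟩ := IsLocalization.exists_mk'_eq q.primeCompl x
  have ht : residue _ (IsLocalization.mk' (Localization.AtPrime q) (1 : B) t) =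
      (residue _ (algebraMap B (Localization.AtPrime q) t))⁻¹ :=
    eq_inv_of_mul_eq_one_left <| by rw [← map_mul, IsLocalization.mk'_spec, map_one, map_one]
  rw [IsLocalization.mk'_eq_mul_mk'_one, map_mul, ht]
  exact mul_mem (hB b) (inv_mem (hB t))

theorem Localization.AtPrime.exists_mul_eq_of_localRingHom_surjective {R B : Type*}
    [CommRing R] [CommRing B] [IsDomain B] (f : R →+* B) (q : Ideal B) [q.IsPrime]
    (h : Function.Surjective (localRingHom (q.comap f) q f rfl)) (b : B) :
    ∃ a s : R, f s ≠ 0 ∧ f s * b = f a := by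
  obtain ⟨r, hr⟩ := h (algebraMap B _ b)
  obtain ⟨a, s, rfl⟩ := IsLocalization.exists_mk'_eq (q.comap f).primeCompl r
  refine ⟨a, s, fun h0 => s.2 (by simp [h0]), ?_⟩
  apply IsLocalization.injective (Localization.AtPrime q) q.primeCompl_le_nonZeroDivisors
  rw [localRingHom_mk', IsLocalization.mk'_eq_iff_eq_mul] at hr
  rw [map_mul, hr, mul_comm]

theorem fixedSubring.smul_eq_self_of_mul_eq {G B : Type*} [Group G] [CommRing B] [IsDomain B]
    [MulSemiringAction G B] {a s : fixedSubring G B} {b : B} (hs : (s : B) ≠ 0)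
    (hsb : s * b = a) (g : G) : g • b = b := by
  refine mul_left_cancel₀ hs ?_
  calc (s : B) * g • b = g • (s : B) * g • b := by rw [s.2 g]
    _ = s * b := by rw [← smul_mul', hsb, a.2 g]

theorem stmt18_general {G B : Type*} [Group G] [CommRing B] [IsDomain B]
    [MulSemiringAction G B] [FaithfulSMul G B]
    (𝔮 : Ideal B) [𝔮.IsPrime]
    (hres : ∀ b : B, ∃ a s : fixedSubring G B,
      (s : B) ∉ 𝔮 ∧ (s : B) * b - (a : B) ∈ 𝔮)
    (hfin : @Module.Finite (Localization.AtPrime (𝔮.comap (fixedSubring G B).subtype))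
      (Localization.AtPrime 𝔮) _ _
      (@Algebra.toModule _ _ _ _
        (Localization.localRingHom (𝔮.comap (fixedSubring G B).subtype) 𝔮
          (fixedSubring G B).subtype rfl).toAlgebra))
    (hunr : @Algebra.FormallyUnramified (Localization.AtPrime (𝔮.comap (fixedSubring G B).subtype))
      (Localization.AtPrime 𝔮) _ _
      ((Localization.localRingHom (𝔮.comap (fixedSubring G B).subtype) 𝔮
          (fixedSubring G B).subtype rfl).toAlgebra)) :
    ∀ g : G, g = 1 := by
  set f := (fixedSubring G B).subtype
  let := (Localization.localRingHom (𝔮.comap f) 𝔮 f rfl).toAlgebra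
  have : IsLocalHom (algebraMap (Localization.AtPrime (𝔮.comap f)) (Localization.AtPrime 𝔮)) :=
    Localization.isLocalHom_localRingHom _ _ _ _
  have hsurj := IsLocalRing.algebraMap_surjective_of_forall_sub_mem_maximalIdeal
    (Localization.AtPrime.exists_sub_localRingHom_mem_maximalIdeal f 𝔮 hres)
  intro g
  refine eq_of_smul_eq_smul (α := B) fun b => ?_
  obtain ⟨a, s, hs, hsb⟩ :=
    Localization.AtPrime.exists_mul_eq_of_localRingHom_surjective f 𝔮 hsurj b
  rw [one_smul]
  exact fixedSubring.smul_eq_self_of_mul_eq hs hsb g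

/-- let a finite group `G` act faithfully on an integral domain `B`
with fixed ring `A`, and let `𝔮` be a prime of `B` over `𝔭 = 𝔮 ∩ A`.  If the
inertia group of `𝔮` is all of `G` (every `g` acts trivially modulo `𝔮`), the
residue field extension is trivial (`κ(𝔮) = κ(𝔭)`), and `A_𝔭 → B_𝔮` is a finite
étale (flat and unramified) local homomorphism, then `G` is trivial. -/
theorem stmt18 {G B : Type*} [Group G] [Finite G] [CommRing B] [IsDomain B]
    [MulSemiringAction G B] [FaithfulSMul G B]
    (𝔮 : Ideal B) [𝔮.IsPrime]
    (hinertia : ∀ (g : G) (b : B), g • b - b ∈ 𝔮)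
    (hres : ∀ b : B, ∃ a s : fixedSubring G B,
      (s : B) ∉ 𝔮 ∧ (s : B) * b - (a : B) ∈ 𝔮)
    (hfin : @Module.Finite (Localization.AtPrime (𝔮.comap (fixedSubring G B).subtype))
      (Localization.AtPrime 𝔮) _ _
      (@Algebra.toModule _ _ _ _
        (Localization.localRingHom (𝔮.comap (fixedSubring G B).subtype) 𝔮
          (fixedSubring G B).subtype rfl).toAlgebra))
    (hflat : @Module.Flat (Localization.AtPrime (𝔮.comap (fixedSubring G B).subtype))
      (Localization.AtPrime 𝔮) _ _
      (@Algebra.toModule _ _ _ _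
        (Localization.localRingHom (𝔮.comap (fixedSubring G B).subtype) 𝔮
          (fixedSubring G B).subtype rfl).toAlgebra))
    (hunr : @Algebra.FormallyUnramified (Localization.AtPrime (𝔮.comap (fixedSubring G B).subtype))
      (Localization.AtPrime 𝔮) _ _
      ((Localization.localRingHom (𝔮.comap (fixedSubring G B).subtype) 𝔮
          (fixedSubring G B).subtype rfl).toAlgebra)) :
    ∀ g : G, g = 1 :=
  stmt18_general 𝔮 hres hfin hunr
end
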